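/- Let H = {H_α}_{α∈π} be a finite type involutory Hopf π-coalgebra with dim H_1 ≠ 0 in k. Let (e_i) be a basis of H_1 and define C = Σ_{i,k} δ_i^{i,k} e_k ∈ H_1, where Δ_{1,1}(e_i) = Σ_{j,k} δ_i^{j,k} e_j ⊗ e_k. Then C is a non-zero two-sided integral for the Hopf algebra H_1, S_1(C) = C, and ε(C) = T_1(C) = dim H_1, where T_1(x) = Tr(r(x)). -/

import Mathlib

open TensorProduct

/-- The canonical `k`-linear isomorphism-as-map `H α →ₗ[k] H β` induced by an equality `α = β`. -/
def Lcast (k : Type*) [CommSemiring k] {π : Type*} (H : π → Type*)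
    [∀ α, AddCommMonoid (H α)] [∀ α, Module k (H α)] {α β : π} (h : α = β) :
    H α →ₗ[k] H β := by subst h; exact LinearMap.id

/-- A Hopf `π`-coalgebra over a field `k` (Turaev): a family of `k`-algebras `H α`
with comultiplication `Δ α β : H (α * β) →ₐ[k] H α ⊗[k] H β`, counit `ε : H 1 →ₐ[k] k`
and antipode `S α : H α →ₗ[k] H α⁻¹`, satisfying coassociativity, counit and
antipode axioms. -/
structure HopfGroupCoalgebra (k : Type*) [Field k] (π : Type*) [Group π]
    (H : π → Type*) [∀ α, Ring (H α)] [∀ α, Algebra k (H α)] where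
  Δ : ∀ α β : π, H (α * β) →ₐ[k] TensorProduct k (H α) (H β)
  ε : H (1 : π) →ₐ[k] k
  S : ∀ α : π, H α →ₗ[k] H α⁻¹
  coassoc : ∀ (α β γ : π) (x : H (α * β * γ)),
    (TensorProduct.assoc k (H α) (H β) (H γ))
        (TensorProduct.map (Δ α β).toLinearMap LinearMap.id (Δ (α * β) γ x)) =
      TensorProduct.map LinearMap.id (Δ β γ).toLinearMap
        (Δ α (β * γ) (Lcast k H (mul_assoc α β γ) x))
  counit_right : ∀ (α : π) (x : H (α * 1)),
    (TensorProduct.rid k (H α))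
        (TensorProduct.map LinearMap.id ε.toLinearMap (Δ α 1 x)) =
      Lcast k H (mul_one α) x
  counit_left : ∀ (α : π) (x : H (1 * α)),
    (TensorProduct.lid k (H α))
        (TensorProduct.map ε.toLinearMap LinearMap.id (Δ 1 α x)) =
      Lcast k H (one_mul α) x
  antipode_left : ∀ (α : π) (x : H (α⁻¹ * α)),
    (LinearMap.mul' k (H α))
        (TensorProduct.map ((Lcast k H (inv_inv α)).comp (S α⁻¹)) LinearMap.id (Δ α⁻¹ α x)) =
      ε (Lcast k H (inv_mul_cancel α) x) • (1 : H α)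
  antipode_right : ∀ (α : π) (x : H (α * α⁻¹)),
    (LinearMap.mul' k (H α))
        (TensorProduct.map LinearMap.id ((Lcast k H (inv_inv α)).comp (S α⁻¹)) (Δ α α⁻¹ x)) =
      ε (Lcast k H (mul_inv_cancel α) x) • (1 : H α)

/-!
Write `f ⇀ y = ∑ y₁ f(y₂)` for the action of a functional `f` on `A = H 1`. The element `C` is
characterised by `f C = Tr (f ⇀ ·)` for every `f`. Since `1 ⊗ x = ∑ (S x₁ ⊗ 1) Δ x₂`, acting by
`f ∘ L_x` is `∑ L_{S x₁} ∘ (f ⇀ ·) ∘ L_{x₂}`; cyclicity of the trace turns `f (x C)` into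
`Tr ((f ⇀ ·) ∘ L_{∑ x₂ S x₁})`, and `∑ x₂ S x₁ = ε(x)` because `S² = id`. So `C` is a left
integral, and symmetrically a right one. Taking `f = ε` gives `ε C = Tr id = dim A`; then
`r(C) = ε(·) C` has trace `ε C`, and `S` turns `C · S C = ε(C) C` into `C · S C = ε(C) S C`.
-/

open LinearMap HopfAlgebra
open Coalgebra (comul counit Repr)
open scoped Coalgebra

namespace TensorProduct

lemma apply_lid_rTensor {R M : Type*} [CommSemiring R] [AddCommMonoid M] [Module R M]
    (f g : Module.Dual R M) (u : M ⊗[R] M) :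
    f (TensorProduct.lid R M (g.rTensor M u)) = g (TensorProduct.rid R M (f.lTensor M u)) := by
  induction u using TensorProduct.induction_on with
  | zero => simp
  | tmul p q => simp [mul_comm]
  | add u v hu hv => simp only [map_add, hu, hv]

variable {R A : Type*} [CommSemiring R] [Semiring A] [Algebra R A] (f : Module.Dual R A)

lemma rid_lTensor_tmul_one_mul (a : A) (u : A ⊗[R] A) :
    TensorProduct.rid R A (f.lTensor A ((a ⊗ₜ 1) * u)) =
      a * TensorProduct.rid R A (f.lTensor A u) := by
  induction u using TensorProduct.induction_on with
  | zero => simp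
  | tmul p q => simp
  | add u v hu hv => simp only [mul_add, map_add, hu, hv]

lemma rid_lTensor_mul_tmul_one (a : A) (u : A ⊗[R] A) :
    TensorProduct.rid R A (f.lTensor A (u * (a ⊗ₜ 1))) =
      TensorProduct.rid R A (f.lTensor A u) * a := by
  induction u using TensorProduct.induction_on with
  | zero => simp
  | tmul p q => simp
  | add u v hu hv => simp only [add_mul, map_add, hu, hv]

lemma rid_lTensor_one_tmul_mul (x : A) (u : A ⊗[R] A) :
    TensorProduct.rid R A (f.lTensor A ((1 ⊗ₜ x) * u)) =
      TensorProduct.rid R A ((f ∘ₗ mulLeft R x).lTensor A u) := by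
  induction u using TensorProduct.induction_on with
  | zero => simp
  | tmul p q => simp
  | add u v hu hv => simp only [mul_add, map_add, hu, hv]

lemma rid_lTensor_mul_one_tmul (x : A) (u : A ⊗[R] A) :
    TensorProduct.rid R A (f.lTensor A (u * (1 ⊗ₜ x))) =
      TensorProduct.rid R A ((f ∘ₗ mulRight R x).lTensor A u) := by
  induction u using TensorProduct.induction_on with
  | zero => simp
  | tmul p q => simp
  | add u v hu hv => simp only [add_mul, map_add, hu, hv]

end TensorProduct

lemma LinearMap.trace_eq_sum_coord {R M ι : Type*} [CommRing R] [AddCommGroup M] [Module R M]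
    [Fintype ι] (b : Module.Basis ι R M) (F : M →ₗ[R] M) :
    trace R M F = ∑ i, b.coord i (F (b i)) := by
  classical
  rw [trace_eq_matrix_trace R b, Matrix.trace]
  simp [Matrix.diag, LinearMap.toMatrix_apply]

namespace Coalgebra

section LeftHit

variable {R A : Type*} [CommSemiring R] [AddCommMonoid A] [Module R A]

/-- `leftHit f y = ∑ y₁ f(y₂)`, the hit action `f ⇀ y` of the dual on a coalgebra. -/
def leftHit [CoalgebraStruct R A] : Module.Dual R A →ₗ[R] A →ₗ[R] A where
  toFun f := (_root_.TensorProduct.rid R A).toLinearMap ∘ₗ f.lTensor A ∘ₗ comul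
  map_add' f g := by ext; simp [lTensor_add]
  map_smul' c f := by ext; simp [lTensor_smul]

lemma leftHit_apply [CoalgebraStruct R A] (f : Module.Dual R A) (y : A) :
    leftHit f y = _root_.TensorProduct.rid R A (f.lTensor A (comul y)) := rfl

@[simp]
lemma leftHit_counit [Coalgebra R A] : leftHit (counit : Module.Dual R A) = .id := by
  ext y
  simp [leftHit_apply]

end LeftHit

variable {R A : Type*} [CommRing R] [AddCommGroup A] [Module R A] [Module.Free R A]
  [Module.Finite R A]

variable (R A) in
/-- The element `C`: `f C = Tr (f ⇀ ·)` for every functional `f`. -/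
noncomputable def traceElement [CoalgebraStruct R A] : A :=
  (Module.evalEquiv R A).symm (trace R A ∘ₗ leftHit)

lemma apply_traceElement [CoalgebraStruct R A] (f : Module.Dual R A) :
    f (traceElement R A) = trace R A (leftHit f) :=
  Module.apply_evalEquiv_symm_apply R A f _

lemma sum_lid_rTensor_coord_comul [CoalgebraStruct R A] {ι : Type*} [Fintype ι]
    (b : Module.Basis ι R A) :
    ∑ i, _root_.TensorProduct.lid R A ((b.coord i).rTensor A (comul (b i))) =
      traceElement R A := by
  refine (Module.evalEquiv R A).injective (LinearMap.ext fun f => ?_)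
  change f _ = f _
  rw [apply_traceElement, map_sum, trace_eq_sum_coord b]
  exact Finset.sum_congr rfl fun i _ => apply_lid_rTensor f (b.coord i) _

lemma counit_traceElement [Coalgebra R A] :
    counit (R := R) (traceElement R A) = Module.finrank R A := by
  rw [apply_traceElement, leftHit_counit, trace_id]

lemma traceElement_ne_zero [Coalgebra R A] (h : (Module.finrank R A : R) ≠ 0) :
    traceElement R A ≠ 0 := by
  intro h0
  rw [← counit_traceElement, h0, map_zero] at h
  exact h rfl

end Coalgebra

open Coalgebra (leftHit leftHit_apply traceElement apply_traceElement counit_traceElement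
  sum_lid_rTensor_coord_comul traceElement_ne_zero)

namespace HopfAlgebra

section Semiring

variable {R A ι : Type*} [CommSemiring R] [Semiring A] [HopfAlgebra R A]

lemma sum_right_mul_antipode_left_eq_algebraMap_counit
    (hS : Function.Involutive (antipode R (A := A))) {a : A} (repr : Repr R a ι) :
    ∑ i ∈ repr.index, repr.right i * antipode R (repr.left i) = algebraMap R A (counit a) := by
  apply hS.injective
  simp [map_sum, antipode_mul_antidistrib, hS _, sum_mul_antipode_eq_algebraMap_counit,
    Algebra.algebraMap_eq_smul_one]

lemma rTensor_assoc_symm_lTensor_comul {G : A ⊗[R] A →ₗ[R] A}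
    (hG : G ∘ₗ comul = Algebra.linearMap R A ∘ₗ counit) (x : A) :
    G.rTensor A ((TensorProduct.assoc R A A A).symm (comul.lTensor A (comul x))) = 1 ⊗ₜ x := by
  rw [Coalgebra.coassoc_symm_apply, ← rTensor_comp_apply, hG, rTensor_comp_apply,
    Coalgebra.rTensor_counit_comul]
  simp

lemma sum_antipode_tmul_one_mul_comul {x : A} (repr : Repr R x ι) :
    ∑ i ∈ repr.index, (antipode R (repr.left i) ⊗ₜ[R] (1 : A)) * comul (repr.right i) =
      1 ⊗ₜ x := by
  have key (a : A) (u : A ⊗[R] A) : (antipode R a ⊗ₜ[R] (1 : A)) * u =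
      (mul' R A ∘ₗ (antipode R).rTensor A).rTensor A
        ((TensorProduct.assoc R A A A).symm (a ⊗ₜ u)) := by
    induction u using TensorProduct.induction_on with
    | zero => simp
    | tmul p q => simp
    | add u v hu hv => simp only [mul_add, tmul_add, map_add, hu, hv]
  simp only [key, ← map_sum, ← lTensor_tmul]
  rw [repr.eq]
  exact rTensor_assoc_symm_lTensor_comul (mul_antipode_rTensor_comul (R := R)) x

lemma sum_comul_mul_antipode_tmul_one (hS : Function.Involutive (antipode R (A := A))) {x : A}
    (repr : Repr R x ι) :
    ∑ i ∈ repr.index, comul (repr.right i) * (antipode R (repr.left i) ⊗ₜ[R] (1 : A)) =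
      1 ⊗ₜ x := by
  have key (a : A) (u : A ⊗[R] A) : u * (antipode R a ⊗ₜ[R] (1 : A)) =
      (mul' R A ∘ₗ (TensorProduct.comm R A A).toLinearMap ∘ₗ (antipode R).rTensor A).rTensor A
        ((TensorProduct.assoc R A A A).symm (a ⊗ₜ u)) := by
    induction u using TensorProduct.induction_on with
    | zero => simp
    | tmul p q => simp
    | add u v hu hv => simp only [add_mul, tmul_add, map_add, hu, hv]
  simp only [key, ← map_sum, ← lTensor_tmul]
  rw [repr.eq]
  refine rTensor_assoc_symm_lTensor_comul (LinearMap.ext fun y => ?_) x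
  rw [comp_apply, ← (ℛ R y).eq]
  simp [map_sum, sum_right_mul_antipode_left_eq_algebraMap_counit hS]

lemma leftHit_comp_mulLeft (f : Module.Dual R A) {x : A} (repr : Repr R x ι) :
    leftHit (f ∘ₗ mulLeft R x) = ∑ i ∈ repr.index,
      mulLeft R (antipode R (repr.left i)) ∘ₗ leftHit f ∘ₗ mulLeft R (repr.right i) := by
  ext y
  rw [leftHit_apply, ← rid_lTensor_one_tmul_mul, ← sum_antipode_tmul_one_mul_comul repr,
    Finset.sum_mul, map_sum, map_sum, LinearMap.sum_apply]
  refine Finset.sum_congr rfl fun i _ => ?_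
  rw [mul_assoc, ← Bialgebra.comul_mul, rid_lTensor_tmul_one_mul]
  rfl

lemma leftHit_comp_mulRight (hS : Function.Involutive (antipode R (A := A)))
    (f : Module.Dual R A) {x : A} (repr : Repr R x ι) :
    leftHit (f ∘ₗ mulRight R x) = ∑ i ∈ repr.index,
      mulRight R (antipode R (repr.left i)) ∘ₗ leftHit f ∘ₗ mulRight R (repr.right i) := by
  ext y
  rw [leftHit_apply, ← rid_lTensor_mul_one_tmul, ← sum_comul_mul_antipode_tmul_one hS repr,
    Finset.mul_sum, map_sum, map_sum, LinearMap.sum_apply]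
  refine Finset.sum_congr rfl fun i _ => ?_
  rw [← mul_assoc, ← Bialgebra.comul_mul, rid_lTensor_mul_tmul_one]
  rfl

lemma antipode_eq_self_of_mul_eq_counit_smul (hS : Function.Involutive (antipode R (A := A)))
    {c : A} (hc : ∀ x, c * x = counit (R := R) x • c)
    (hreg : IsSMulRegular A (counit (R := R) c)) :
    antipode R c = c := by
  refine hreg ?_
  calc counit (R := R) c • antipode R c = antipode R (c * antipode R c) := by
        rw [hc, counit_antipode, map_smul]
    _ = counit (R := R) c • c := by
        rw [antipode_mul_antidistrib, hS c, hc, counit_antipode]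

end Semiring

variable {R A : Type*} [CommRing R] [Ring A] [HopfAlgebra R A] [Module.Free R A]
  [Module.Finite R A]

lemma trace_leftHit_comp_mulLeft (hS : Function.Involutive (antipode R (A := A)))
    (f : Module.Dual R A) (x : A) :
    trace R A (leftHit (f ∘ₗ mulLeft R x)) = counit (R := R) x * trace R A (leftHit f) := by
  have hsum : ∑ i ∈ (ℛ R x).index,
      leftHit f ∘ₗ mulLeft R ((ℛ R x).right i * antipode R ((ℛ R x).left i)) =
      counit (R := R) x • leftHit f := by
    ext y
    simp only [LinearMap.sum_apply, comp_apply, mulLeft_apply, ← map_sum, ← Finset.sum_mul,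
      sum_right_mul_antipode_left_eq_algebraMap_counit hS, Algebra.algebraMap_eq_smul_one,
      smul_mul_assoc, one_mul, map_smul, LinearMap.smul_apply]
  calc trace R A (leftHit (f ∘ₗ mulLeft R x))
      = ∑ i ∈ (ℛ R x).index, trace R A (leftHit f ∘ₗ
          mulLeft R ((ℛ R x).right i * antipode R ((ℛ R x).left i))) := by
        rw [leftHit_comp_mulLeft f (ℛ R x), map_sum]
        refine Finset.sum_congr rfl fun i _ => ?_
        rw [trace_comp_comm', comp_assoc, ← mulLeft_mul]
    _ = counit (R := R) x * trace R A (leftHit f) := by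
        rw [← map_sum, hsum, map_smul, smul_eq_mul]

lemma trace_leftHit_comp_mulRight (hS : Function.Involutive (antipode R (A := A)))
    (f : Module.Dual R A) (x : A) :
    trace R A (leftHit (f ∘ₗ mulRight R x)) = counit (R := R) x * trace R A (leftHit f) := by
  have hsum : ∑ i ∈ (ℛ R x).index,
      leftHit f ∘ₗ mulRight R (antipode R ((ℛ R x).left i) * (ℛ R x).right i) =
      counit (R := R) x • leftHit f := by
    ext y
    simp only [LinearMap.sum_apply, comp_apply, mulRight_apply, ← map_sum, ← Finset.mul_sum,
      sum_antipode_mul_eq_algebraMap_counit, Algebra.algebraMap_eq_smul_one, mul_smul_comm,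
      mul_one, map_smul, LinearMap.smul_apply]
  calc trace R A (leftHit (f ∘ₗ mulRight R x))
      = ∑ i ∈ (ℛ R x).index, trace R A (leftHit f ∘ₗ
          mulRight R (antipode R ((ℛ R x).left i) * (ℛ R x).right i)) := by
        rw [leftHit_comp_mulRight hS f (ℛ R x), map_sum]
        refine Finset.sum_congr rfl fun i _ => ?_
        rw [trace_comp_comm', comp_assoc, ← mulRight_mul]
    _ = counit (R := R) x * trace R A (leftHit f) := by
        rw [← map_sum, hsum, map_smul, smul_eq_mul]

lemma mul_traceElement (hS : Function.Involutive (antipode R (A := A))) (x : A) :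
    x * traceElement R A = counit (R := R) x • traceElement R A := by
  refine (Module.evalEquiv R A).injective (LinearMap.ext fun f => ?_)
  change (f ∘ₗ mulLeft R x) (traceElement R A) = f (counit (R := R) x • traceElement R A)
  rw [apply_traceElement, map_smul, apply_traceElement, trace_leftHit_comp_mulLeft hS, smul_eq_mul]

lemma traceElement_mul (hS : Function.Involutive (antipode R (A := A))) (x : A) :
    traceElement R A * x = counit (R := R) x • traceElement R A := by
  refine (Module.evalEquiv R A).injective (LinearMap.ext fun f => ?_)
  change (f ∘ₗ mulRight R x) (traceElement R A) = f (counit (R := R) x • traceElement R A)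
  rw [apply_traceElement, map_smul, apply_traceElement, trace_leftHit_comp_mulRight hS,
    smul_eq_mul]

lemma trace_mulRight_traceElement (hS : Function.Involutive (antipode R (A := A))) :
    trace R A (mulRight R (traceElement R A)) = Module.finrank R A := by
  have : mulRight R (traceElement R A) = (counit : Module.Dual R A).smulRight (traceElement R A) :=
    LinearMap.ext (mul_traceElement hS)
  rw [this, trace_smulRight, counit_traceElement]

lemma antipode_traceElement (hS : Function.Involutive (antipode R (A := A)))
    (h : IsSMulRegular A (Module.finrank R A : R)) :
    antipode R (traceElement R A) = traceElement R A :=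
  antipode_eq_self_of_mul_eq_counit_smul hS (traceElement_mul hS) (by rwa [counit_traceElement])

end HopfAlgebra

section Lcast

variable {k : Type*} [CommSemiring k] {π : Type*} {H : π → Type*}

lemma Lcast_refl [∀ α, AddCommMonoid (H α)] [∀ α, Module k (H α)] {α : π} (h : α = α) :
    Lcast k H h = LinearMap.id := rfl

lemma Lcast_Lcast [∀ α, AddCommMonoid (H α)] [∀ α, Module k (H α)] {α β γ : π} (h : α = β)
    (h' : β = γ) (x : H α) : Lcast k H h' (Lcast k H h x) = Lcast k H (h.trans h') x := by
  subst h h'; rfl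

lemma Lcast_mul [∀ α, Ring (H α)] [∀ α, Algebra k (H α)] {α β : π} (h : α = β) (x y : H α) :
    Lcast k H h (x * y) = Lcast k H h x * Lcast k H h y := by
  subst h; rfl

lemma Lcast_one [∀ α, Ring (H α)] [∀ α, Algebra k (H α)] {α β : π} (h : α = β) :
    Lcast k H h (1 : H α) = 1 := by
  subst h; rfl

end Lcast

namespace HopfGroupCoalgebra

variable {k : Type*} [Field k] {π : Type*} [Group π] {H : π → Type*}
    [∀ α, Ring (H α)] [∀ α, Algebra k (H α)] (Hc : HopfGroupCoalgebra k π H)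

lemma Δ_Lcast_left {α α' β : π} (h : α = α') (x : H (α * β)) :
    Hc.Δ α' β (Lcast k H (congrArg (· * β) h) x) =
      TensorProduct.map (Lcast k H h) LinearMap.id (Hc.Δ α β x) := by
  subst h
  simp [Lcast_refl]

lemma Δ_Lcast_right {α β β' : π} (h : β = β') (x : H (α * β)) :
    Hc.Δ α β' (Lcast k H (congrArg (α * ·) h) x) =
      TensorProduct.map LinearMap.id (Lcast k H h) (Hc.Δ α β x) := by
  subst h
  simp [Lcast_refl]

lemma S_Lcast {α α' : π} (h : α = α') (x : H α) :
    Hc.S α' (Lcast k H h x) = Lcast k H (congrArg (·⁻¹) h) (Hc.S α x) := by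
  subst h; rfl

def comulOne : H 1 →ₗ[k] H 1 ⊗[k] H 1 :=
  (Hc.Δ 1 1).toLinearMap ∘ₗ Lcast k H (one_mul 1).symm

def antipodeOne : H 1 →ₗ[k] H 1 :=
  Lcast k H inv_one ∘ₗ Hc.S 1

lemma comulOne_apply (x : H 1) : Hc.comulOne x = Hc.Δ 1 1 (Lcast k H (one_mul 1).symm x) := rfl

lemma comulOne_coassoc :
    TensorProduct.assoc k (H 1) (H 1) (H 1) ∘ₗ Hc.comulOne.rTensor (H 1) ∘ₗ Hc.comulOne =
      Hc.comulOne.lTensor (H 1) ∘ₗ Hc.comulOne := by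
  ext y
  have h := Hc.coassoc 1 1 1 (Lcast k H (by simp) (Lcast k H (one_mul 1).symm y))
  rw [Δ_Lcast_left Hc (one_mul 1).symm, Lcast_Lcast, Δ_Lcast_right Hc (one_mul 1).symm] at h
  simp only [comulOne, LinearMap.rTensor_comp, LinearMap.lTensor_comp, LinearMap.comp_apply,
    LinearEquiv.coe_coe]
  exact h

lemma rTensor_counit_comp_comulOne :
    Hc.ε.toLinearMap.rTensor (H 1) ∘ₗ Hc.comulOne = TensorProduct.mk k k (H 1) 1 := by
  ext y
  apply (TensorProduct.lid k (H 1)).injective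
  have h := Hc.counit_left 1 (Lcast k H (one_mul 1).symm y)
  rw [Lcast_Lcast, Lcast_refl] at h
  rw [LinearMap.comp_apply, TensorProduct.mk_apply, TensorProduct.lid_tmul, one_smul]
  exact h

lemma lTensor_counit_comp_comulOne :
    Hc.ε.toLinearMap.lTensor (H 1) ∘ₗ Hc.comulOne = (TensorProduct.mk k (H 1) k).flip 1 := by
  ext y
  apply (TensorProduct.rid k (H 1)).injective
  have h := Hc.counit_right 1 (Lcast k H (one_mul 1).symm y)
  rw [Lcast_Lcast, Lcast_refl] at h
  rw [LinearMap.comp_apply, LinearMap.flip_apply, TensorProduct.mk_apply, TensorProduct.rid_tmul,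
    one_smul]
  exact h

lemma Lcast_comp_S_inv_one_comp_Lcast :
    Lcast k H (inv_inv 1) ∘ₗ Hc.S 1⁻¹ ∘ₗ Lcast k H inv_one.symm = Hc.antipodeOne := by
  ext z
  simp only [LinearMap.comp_apply, S_Lcast, Lcast_Lcast]
  rfl

lemma mul_antipodeOne_rTensor_comulOne :
    LinearMap.mul' k (H 1) ∘ₗ Hc.antipodeOne.rTensor (H 1) ∘ₗ Hc.comulOne =
      Algebra.linearMap k (H 1) ∘ₗ Hc.ε.toLinearMap := by
  ext y
  have h := Hc.antipode_left 1
    (Lcast k H (congrArg (· * 1) inv_one.symm) (Lcast k H (one_mul 1).symm y))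
  rw [Δ_Lcast_left Hc inv_one.symm, Lcast_Lcast, Lcast_Lcast, Lcast_refl,
    ← LinearMap.comp_apply (map _ _), ← TensorProduct.map_comp, LinearMap.comp_id,
    LinearMap.comp_assoc, Lcast_comp_S_inv_one_comp_Lcast, LinearMap.id_apply] at h
  simp only [LinearMap.comp_apply, AlgHom.toLinearMap_apply, Algebra.linearMap_apply,
    Algebra.algebraMap_eq_smul_one]
  exact h

lemma mul_antipodeOne_lTensor_comulOne :
    LinearMap.mul' k (H 1) ∘ₗ Hc.antipodeOne.lTensor (H 1) ∘ₗ Hc.comulOne =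
      Algebra.linearMap k (H 1) ∘ₗ Hc.ε.toLinearMap := by
  ext y
  have h := Hc.antipode_right 1
    (Lcast k H (congrArg (1 * ·) inv_one.symm) (Lcast k H (one_mul 1).symm y))
  rw [Δ_Lcast_right Hc inv_one.symm, Lcast_Lcast, Lcast_Lcast, Lcast_refl,
    ← LinearMap.comp_apply (map _ _), ← TensorProduct.map_comp, LinearMap.comp_id,
    LinearMap.comp_assoc, Lcast_comp_S_inv_one_comp_Lcast, LinearMap.id_apply] at h
  simp only [LinearMap.comp_apply, AlgHom.toLinearMap_apply, Algebra.linearMap_apply,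
    Algebra.algebraMap_eq_smul_one]
  exact h

lemma comulOne_one : Hc.comulOne 1 = 1 := by
  rw [comulOne_apply, Lcast_one, map_one]

lemma comulOne_mul (a b : H 1) : Hc.comulOne (a * b) = Hc.comulOne a * Hc.comulOne b := by
  simp only [comulOne_apply, Lcast_mul, map_mul]

abbrev hopfAlgebraOne : HopfAlgebra k (H 1) :=
  letI : Coalgebra k (H 1) :=
    { comul := Hc.comulOne
      counit := Hc.ε.toLinearMap
      coassoc := Hc.comulOne_coassoc
      rTensor_counit_comp_comul := Hc.rTensor_counit_comp_comulOne
      lTensor_counit_comp_comul := Hc.lTensor_counit_comp_comulOne }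
  { toBialgebra := Bialgebra.mk' k (H 1) (map_one Hc.ε) (map_mul Hc.ε _ _)
      Hc.comulOne_one (Hc.comulOne_mul _ _)
    antipode := Hc.antipodeOne
    mul_antipode_rTensor_comul := Hc.mul_antipodeOne_rTensor_comulOne
    mul_antipode_lTensor_comul := Hc.mul_antipodeOne_lTensor_comulOne }

lemma antipodeOne_involutive
    (hinv : ∀ (α : π) (x : H α), Lcast k H (inv_inv α) (Hc.S α⁻¹ (Hc.S α x)) = x) :
    Function.Involutive Hc.antipodeOne := fun x => by
  simp only [antipodeOne, LinearMap.comp_apply, S_Lcast, Lcast_Lcast]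
  exact hinv 1 x

end HopfGroupCoalgebra

/-- For a finite type involutory Hopf `π`-coalgebra `H` with `dim H 1 ≠ 0` in `k`, the element
`C = ∑_{i,k} δ_i^{i,k} e_k ∈ H 1` (partial trace on the first factor of the comultiplication
`Δ_{1,1}`, computed in any basis `(e_i)` of `H 1`) is a non-zero two-sided integral for the
Hopf algebra `H 1`, with `S_1 C = C` and `ε C = T_1 C = dim H 1`. -/
theorem distinguished_integral (k : Type*) [Field k] (π : Type*) [Group π]
    (H : π → Type*) [∀ α, Ring (H α)] [∀ α, Algebra k (H α)]
    [∀ α, FiniteDimensional k (H α)]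
    (Hc : HopfGroupCoalgebra k π H)
    (hinv : ∀ (α : π) (x : H α), Lcast k H (inv_inv α) (Hc.S α⁻¹ (Hc.S α x)) = x)
    (hdim : (Module.finrank k (H (1 : π)) : k) ≠ 0)
    (ι : Type*) [Fintype ι] (b : Module.Basis ι k (H (1 : π)))
    (C : H (1 : π))
    (hC : C = ∑ i : ι, (TensorProduct.lid k (H (1 : π)))
      (TensorProduct.map (b.coord i) LinearMap.id
        (Hc.Δ 1 1 (Lcast k H (one_mul (1 : π)).symm (b i))))) :
    C ≠ 0 ∧
    (∀ x : H (1 : π), x * C = Hc.ε x • C) ∧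
    (∀ x : H (1 : π), C * x = Hc.ε x • C) ∧
    Lcast k H inv_one (Hc.S 1 C) = C ∧
    Hc.ε C = (Module.finrank k (H (1 : π)) : k) ∧
    LinearMap.trace k (H (1 : π)) (LinearMap.mulRight k C) =
      (Module.finrank k (H (1 : π)) : k) := by
  let _ := Hc.hopfAlgebraOne
  have hS : Function.Involutive (antipode k (A := H 1)) := Hc.antipodeOne_involutive hinv
  obtain rfl : C = traceElement k (H 1) := hC.trans (sum_lid_rTensor_coord_comul b)
  exact ⟨traceElement_ne_zero hdim, mul_traceElement hS, traceElement_mul hS,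
    antipode_traceElement hS (.of_ne_zero hdim), counit_traceElement (R := k) (A := H 1),
    trace_mulRight_traceElement hS⟩
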